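/- Let 0 < ℓ < m < n and R = k[x^n, x^{n-ℓ} y^ℓ, x^{n-m} y^m, y^n]. Let b_2 be the smallest positive integer such that there exist a_2 with 0 ≤ a_2 < n/gcd(ℓ,n) and c_2 > 0 satisfying b_2 m = a_2 ℓ + c_2 n. Then R is Cohen–Macaulay if and only if b_2 ≥ a_2 + c_2. -/

import Mathlib

/-!
`R` is the semigroup ring of the monoid `S ⊆ ℕ²` generated by `(n - x, x)` for `x ∈ {0, ℓ, m, n}`,
so regularity can be read off monomials: `xⁿ, yⁿ` is a regular sequence iff `d ∈ S` and
`d + (0, n) ∈ (n, 0) + S` imply `d ∈ (n, 0) + S`. A point `(u, v)` with `u + v = wn` lies in `S`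
iff `v` is a sum of at most `w` terms from `{ℓ, m, n}`, so the condition reads: if `v` and `v + n`
are sums of at most `w + 1` terms, then `v` is a sum of at most `w` terms.

If `a₂ + c₂ ≤ b₂`, take a representation of `v + n` with at most `w + 1` terms. If it contains `n`,
drop one; if it contains `m` at least `b₂` times, replace `b₂m` by `a₂ℓ + c₂n` and drop one `n`;
otherwise the minimality of `b₂` shows that any representation of `v` is shorter than it.
If `a₂ + c₂ > b₂`, then `v = a₂ℓ + (c₂ - 1)n` is a counterexample: `v + n = b₂m`, while the
minimality of `b₂` and `a₂ < n / gcd(ℓ, n)` force every representation of `v` to have at least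
`a₂ + c₂ - 1` terms.
-/

open MvPolynomial Pointwise

set_option synthInstance.maxHeartbeats 1000000

namespace MvPolynomial

variable {σ R : Type*}

section CommSemiring

variable [CommSemiring R]

lemma support_monomial_one_mul (e : σ →₀ ℕ) (p : MvPolynomial σ R) :
    (monomial e 1 * p).support = p.support.map (addLeftEmbedding e) :=
  AddMonoidAlgebra.support_coeff_single_mul p _ (by simp) _

variable (R) in
noncomputable def monomialSubalgebra (S : AddSubmonoid (σ →₀ ℕ)) :
    Subalgebra R (MvPolynomial σ R) :=
  (restrictSupport R (S : Set (σ →₀ ℕ))).toSubalgebra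
    ((monomial_mem_restrictSupport R).mpr (Or.inl S.zero_mem))
    fun _ _ hp hq =>
      restrictSupport_mono R (Set.add_subset_iff.mpr fun _ ha _ hb => S.add_mem ha hb)
        (restrictSupport_add R (S : Set (σ →₀ ℕ)) S ▸ Submodule.mul_mem_mul hp hq)

lemma mem_monomialSubalgebra {S : AddSubmonoid (σ →₀ ℕ)} {p : MvPolynomial σ R} :
    p ∈ monomialSubalgebra R S ↔ ↑p.support ⊆ (S : Set (σ →₀ ℕ)) :=
  Iff.rfl

lemma adjoin_monomial_image (T : Set (σ →₀ ℕ)) :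
    Algebra.adjoin R ((monomial · (1 : R)) '' T) =
      monomialSubalgebra R (AddSubmonoid.closure T) := by
  refine le_antisymm (Algebra.adjoin_le ?_) fun p hp => ?_
  · rintro _ ⟨t, ht, rfl⟩
    exact (monomial_mem_restrictSupport R).mpr (Or.inl (AddSubmonoid.subset_closure ht))
  change p ∈ restrictSupport R _ at hp
  rw [restrictSupport_eq_span] at hp
  refine (Submodule.span_le (p := Subalgebra.toSubmodule (Algebra.adjoin R _))).mpr ?_ hp
  rintro _ ⟨d, hd, rfl⟩
  induction hd using AddSubmonoid.closure_induction with
  | mem t ht => exact Algebra.subset_adjoin ⟨t, ht, rfl⟩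
  | zero => exact Subalgebra.one_mem _
  | add x y _ _ hx hy =>
    have := Subalgebra.mul_mem _ hx hy
    rwa [monomial_mul, one_mul] at this

end CommSemiring

section CommRing

variable [CommRing R] {S : AddSubmonoid (σ →₀ ℕ)} {e e' : σ →₀ ℕ}

lemma isSMulRegular_of_coe_eq_monomial {u : monomialSubalgebra R S}
    (hu : (u : MvPolynomial σ R) = monomial e 1) : IsSMulRegular (monomialSubalgebra R S) u := by
  intro f g hfg
  have hdiv (p : monomialSubalgebra R S) :
      divMonomial ((u * p : monomialSubalgebra R S) : MvPolynomial σ R) e = p := by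
    rw [Subalgebra.coe_mul, hu, divMonomial_monomial_mul]
  have hfg : u * f = u * g := hfg
  exact Subtype.ext (by rw [← hdiv f, ← hdiv g, hfg])

lemma mem_smul_top_iff_support_subset {u : monomialSubalgebra R S}
    (hu : (u : MvPolynomial σ R) = monomial e 1) (f : monomialSubalgebra R S) :
    f ∈ u • (⊤ : Submodule (monomialSubalgebra R S) (monomialSubalgebra R S)) ↔
      ↑(f : MvPolynomial σ R).support ⊆ e +ᵥ (S : Set (σ →₀ ℕ)) := by
  rw [Submodule.mem_smul_pointwise_iff_exists]
  constructor
  · rintro ⟨g, -, rfl⟩ d hd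
    rw [smul_eq_mul, Subalgebra.coe_mul, hu, support_monomial_one_mul] at hd
    obtain ⟨d', hd', rfl⟩ := Finset.mem_map.mp hd
    exact Set.vadd_mem_vadd_set (g.2 hd')
  · intro hf
    have hsupp : ∀ d ∈ (f : MvPolynomial σ R).support, ∃ s ∈ S, e + s = d := fun d hd => hf hd
    refine ⟨⟨divMonomial (f : MvPolynomial σ R) e, mem_monomialSubalgebra.mpr fun d hd => ?_⟩,
      trivial, Subtype.ext ?_⟩
    · rw [Finset.mem_coe, support_divMonomial, Finset.mem_preimage] at hd
      obtain ⟨s, hs, hsd⟩ := hsupp _ hd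
      exact add_left_cancel hsd ▸ hs
    · have hmod : modMonomial (f : MvPolynomial σ R) e = 0 := by
        ext d
        by_cases hed : e ≤ d
        · exact coeff_modMonomial_of_le _ hed
        · rw [coeff_modMonomial_of_not_le _ hed, coeff_zero, ← notMem_support_iff]
          intro hd
          obtain ⟨s, -, rfl⟩ := hsupp d hd
          exact hed le_self_add
      simpa [hu, hmod] using divMonomial_add_modMonomial (f : MvPolynomial σ R) e

lemma isSMulRegular_quotSMulTop_iff [Nontrivial R] {u v : monomialSubalgebra R S}
    (hu : (u : MvPolynomial σ R) = monomial e 1) (hv : (v : MvPolynomial σ R) = monomial e' 1) :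
    IsSMulRegular (QuotSMulTop u (monomialSubalgebra R S)) v ↔
      ∀ d ∈ S, e' + d ∈ e +ᵥ (S : Set (σ →₀ ℕ)) → d ∈ e +ᵥ (S : Set (σ →₀ ℕ)) := by
  have hsupp (f : monomialSubalgebra R S) : ((v • f : monomialSubalgebra R S) :
      MvPolynomial σ R).support = (f : MvPolynomial σ R).support.map (addLeftEmbedding e') := by
    rw [smul_eq_mul, Subalgebra.coe_mul, hv, support_monomial_one_mul]
  rw [isSMulRegular_quotient_iff_mem_of_smul_mem]
  simp_rw [mem_smul_top_iff_support_subset hu, hsupp]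
  constructor
  · intro H d hd hed
    have hmem : (monomial d 1 : MvPolynomial σ R) ∈ monomialSubalgebra R S :=
      (monomial_mem_restrictSupport R).mpr (Or.inl hd)
    have hsd : ((⟨_, hmem⟩ : monomialSubalgebra R S) : MvPolynomial σ R).support = {d} := by
      classical exact support_monomial.trans (if_neg one_ne_zero)
    have := H ⟨_, hmem⟩ (by rw [hsd]; simpa using hed)
    rw [hsd] at this
    simpa using this
  · intro H f hf d hd
    exact H d (f.2 hd) (hf (Finset.mem_map_of_mem _ hd))

lemma top_ne_ofList_smul_top [Nontrivial R] {A : Subalgebra R (MvPolynomial σ R)} {us : List A}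
    (hus : ∀ u ∈ us, constantCoeff (u : MvPolynomial σ R) = 0) :
    (⊤ : Submodule A A) ≠ Ideal.ofList us • ⊤ := by
  let φ : A →+* R := constantCoeff.comp A.val.toRingHom
  have hker : Ideal.ofList us • (⊤ : Submodule A A) ≤ RingHom.ker φ :=
    Submodule.smul_le.mpr fun r hr s _ => Ideal.mul_mem_right s _ <|
      Ideal.span_le.mpr (fun u hu => hus u hu) hr
  exact fun h => RingHom.ker_ne_top φ (top_le_iff.mp (h.le.trans hker))

theorem isRegular_monomial_pair_iff [Nontrivial R] (he : e ≠ 0) (he' : e' ≠ 0)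
    {u v : monomialSubalgebra R S}
    (hu : (u : MvPolynomial σ R) = monomial e 1) (hv : (v : MvPolynomial σ R) = monomial e' 1) :
    RingTheory.Sequence.IsRegular (monomialSubalgebra R S) [u, v] ↔
      ∀ d ∈ S, e' + d ∈ e +ᵥ (S : Set (σ →₀ ℕ)) → d ∈ e +ᵥ (S : Set (σ →₀ ℕ)) := by
  classical
  have hproper := top_ne_ofList_smul_top (us := [u, v])
    (by simp [hu, hv, constantCoeff_monomial, he, he'])
  rw [RingTheory.Sequence.isRegular_iff, RingTheory.Sequence.isWeaklyRegular_cons_iff,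
    RingTheory.Sequence.isWeaklyRegular_singleton_iff, isSMulRegular_quotSMulTop_iff hu hv]
  exact ⟨fun h => h.1.2, fun h => ⟨⟨isSMulRegular_of_coe_eq_monomial hu, h⟩, hproper⟩⟩

end CommRing

end MvPolynomial

def IsSumOfAtMost (l m n w y : ℕ) : Prop :=
  ∃ β γ δ : ℕ, β * l + γ * m + δ * n = y ∧ β + γ + δ ≤ w

namespace IsSumOfAtMost

variable {l m n w w' y y' : ℕ}

lemma add (h : IsSumOfAtMost l m n w y) (h' : IsSumOfAtMost l m n w' y') :
    IsSumOfAtMost l m n (w + w') (y + y') := by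
  obtain ⟨β, γ, δ, rfl, hw⟩ := h
  obtain ⟨β', γ', δ', rfl, hw'⟩ := h'
  exact ⟨β + β', γ + γ', δ + δ', by ring, by omega⟩

lemma le_mul (hl : l ≤ n) (hm : m ≤ n) (h : IsSumOfAtMost l m n w y) : y ≤ w * n := by
  obtain ⟨β, γ, δ, rfl, hw⟩ := h
  calc β * l + γ * m + δ * n ≤ β * n + γ * n + δ * n := by gcongr
    _ = (β + γ + δ) * n := by ring
    _ ≤ w * n := by gcongr

end IsSumOfAtMost

section Arithmetic

variable {l m n a b c : ℕ}

lemma le_of_mul_eq_add_mul (hl : 0 < l) (hln : l < n)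
    (hmin : ∀ b' : ℕ, 0 < b' →
      (∃ a' c' : ℕ, a' < n / Nat.gcd l n ∧ 0 < c' ∧ b' * m = a' * l + c' * n) → b ≤ b')
    {b' x C : ℕ} (hC : 0 < C) (h : b' * m = x * l + C * n) : b ≤ b' := by
  obtain ⟨l', n', -, hl', hn'⟩ := Nat.exists_coprime l n
  set g := Nat.gcd l n
  have hg : 0 < g := Nat.gcd_pos_of_pos_left n hl
  have hn'g : n / g = n' := by rw [hn', Nat.mul_div_cancel _ hg]
  have hn'pos : 0 < n' := Nat.pos_of_ne_zero fun h0 => by rw [h0, zero_mul] at hn'; omega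
  refine hmin b' (Nat.pos_of_ne_zero fun hb => ?_) ⟨x % n', C + x / n' * l', ?_, by omega, ?_⟩
  · subst hb; nlinarith
  · rw [hn'g]; exact Nat.mod_lt x hn'pos
  · have hx := Nat.div_add_mod x n'
    rw [h, hl', hn']
    nth_rewrite 1 [← hx]
    ring

lemma add_le_add_of_mul_add_mul_eq (hln : l ≤ n) (ha : a < n / Nat.gcd l n)
    {β δ : ℕ} (h : β * l + δ * n = a * l + c * n) : a + c ≤ β + δ := by
  obtain ⟨l', n', hcop, hl', hn'⟩ := Nat.exists_coprime l n
  set g := Nat.gcd l n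
  have hg : 0 < g := Nat.pos_of_ne_zero fun hg => by simp [hg] at ha
  have hn'g : n / g = n' := by rw [hn', Nat.mul_div_cancel _ hg]
  rw [hn'g] at ha
  have hle : l' ≤ n' := Nat.le_of_mul_le_mul_right (hl' ▸ hn' ▸ hln) hg
  have h' : (β * l' + δ * n' : ℤ) = a * l' + c * n' := by
    exact_mod_cast Nat.eq_of_mul_eq_mul_right hg (by rw [hl', hn'] at h; linarith)
  obtain ⟨t, ht⟩ : (n' : ℤ) ∣ (β - a : ℤ) :=
    (Nat.Coprime.isCoprime hcop.symm).dvd_of_dvd_mul_right ⟨c - δ, by linear_combination h'⟩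
  have ht0 : 0 ≤ t := by nlinarith
  have hct : (c - δ : ℤ) = l' * t :=
    mul_left_cancel₀ (by omega : (n' : ℤ) ≠ 0) (by linear_combination -h' + (l' : ℤ) * ht)
  zify
  nlinarith [mul_nonneg (sub_nonneg.mpr (Nat.cast_le.mpr hle : (l' : ℤ) ≤ n')) ht0]

lemma add_le_of_add_eq_mul (hln : l ≤ n) (hm : 0 < m) (ha : a < n / Nat.gcd l n)
    (hrel : b * m = a * l + c * n)
    (hmin : ∀ b' x C : ℕ, 0 < C → b' * m = x * l + C * n → b ≤ b')
    {β γ δ : ℕ} (h : β * l + γ * m + δ * n + n = b * m) : a + c ≤ β + γ + δ + 1 := by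
  have hγ : γ = 0 := by
    have hγb : γ ≤ b := Nat.le_of_mul_le_mul_right (by omega) hm
    have := hmin (b - γ) β (δ + 1) δ.succ_pos (by zify [hγb] at h ⊢; linarith)
    omega
  subst hγ
  have := add_le_add_of_mul_add_mul_eq hln ha (β := β) (δ := δ + 1) (c := c) (by linarith)
  omega

lemma add_succ_le_add (hl : 0 < l) (hlm : l < m) (hmn : m < n)
    (hmin : ∀ b' x C : ℕ, 0 < C → b' * m = x * l + C * n → b ≤ b')
    {β γ δ β' γ' : ℕ} (hγ' : γ' < b) (h : β * l + γ * m + δ * n + n = β' * l + γ' * m) :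
    β + γ + δ + 1 ≤ β' + γ' := by
  rcases le_total γ' γ with hγ | hγ
  · obtain ⟨D, rfl⟩ := Nat.exists_eq_add_of_le hγ
    have : (β + D + δ + 1) * l ≤ β' * l := by nlinarith
    have := Nat.le_of_mul_le_mul_right this hl
    omega
  obtain ⟨D, rfl⟩ := Nat.exists_eq_add_of_le hγ
  rcases le_total β β' with hβ | hβ
  · obtain ⟨E, rfl⟩ := Nat.exists_eq_add_of_le hβ
    have : (δ + 1) * n ≤ (E + D) * n := by nlinarith
    have := Nat.le_of_mul_le_mul_right this (by omega)
    omega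
  · obtain ⟨E, rfl⟩ := Nat.exists_eq_add_of_le hβ
    have := hmin D E (δ + 1) δ.succ_pos (by linarith)
    omega

lemma IsSumOfAtMost.of_add_right (hl : 0 < l) (hlm : l < m) (hmn : m < n) (hc : 0 < c)
    (hrel : b * m = a * l + c * n)
    (hmin : ∀ b' x C : ℕ, 0 < C → b' * m = x * l + C * n → b ≤ b')
    (hcb : a + c ≤ b) {w y : ℕ} (hy : IsSumOfAtMost l m n (w + 1) y)
    (hyn : IsSumOfAtMost l m n (w + 1) (y + n)) : IsSumOfAtMost l m n w y := by
  obtain ⟨β', γ', δ', h', hw'⟩ := hyn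
  rcases δ' with _ | δ'
  · by_cases hb : b ≤ γ'
    · -- trade `b` copies of `m` for `a` copies of `l` and `c` copies of `n`
      refine ⟨β' + a, γ' - b, c - 1, ?_, by omega⟩
      zify [hb, hc] at h' hrel ⊢
      linear_combination h' - hrel
    · obtain ⟨β, γ, δ, h, -⟩ := hy
      have := add_succ_le_add hl hlm hmn hmin (not_le.mp hb) (β := β) (γ := γ) (δ := δ)
        (β' := β') (by rw [h]; linarith)
      exact ⟨β, γ, δ, h, by omega⟩
  · exact ⟨β', γ', δ', by linarith, by omega⟩

theorem forall_isSumOfAtMost_iff (hl : 0 < l) (hlm : l < m) (hmn : m < n)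
    (ha : a < n / Nat.gcd l n) (hc : 0 < c) (hrel : b * m = a * l + c * n)
    (hmin : ∀ b' : ℕ, 0 < b' →
      (∃ a' c' : ℕ, a' < n / Nat.gcd l n ∧ 0 < c' ∧ b' * m = a' * l + c' * n) → b ≤ b') :
    (∀ w y, IsSumOfAtMost l m n (w + 1) y → IsSumOfAtMost l m n (w + 1) (y + n) →
      IsSumOfAtMost l m n w y) ↔ a + c ≤ b := by
  have hmin' : ∀ b' x C : ℕ, 0 < C → b' * m = x * l + C * n → b ≤ b' :=
    fun _ _ _ hC h => le_of_mul_eq_add_mul hl (hlm.trans hmn) hmin hC h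
  refine ⟨fun H => ?_, fun hcb w y => IsSumOfAtMost.of_add_right hl hlm hmn hc hrel hmin' hcb⟩
  by_contra! hba
  -- `a l + (c - 1) n = b m - n` is a sum of `a + c - 1` terms, but of no fewer
  obtain ⟨c, rfl⟩ := Nat.exists_eq_add_one_of_ne_zero hc.ne'
  have hb : 0 < b := Nat.pos_of_ne_zero fun hb => by
    have : 0 < (c + 1) * n := Nat.mul_pos c.succ_pos (by omega)
    rw [hb, zero_mul] at hrel
    omega
  obtain ⟨w, hw⟩ : ∃ w, a + c = w + 1 := ⟨a + c - 1, by omega⟩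
  obtain ⟨β, γ, δ, h, hle⟩ := H w (a * l + c * n) ⟨a, 0, c, by ring, by omega⟩
    ⟨0, b, 0, by rw [hrel]; ring, by omega⟩
  have := add_le_of_add_eq_mul (hlm.trans hmn).le (hl.trans hlm) ha hrel hmin' (β := β) (γ := γ)
    (δ := δ) (by rw [h, hrel]; ring)
  omega

noncomputable def curveMonoid (l m n : ℕ) : AddSubmonoid (Fin 2 →₀ ℕ) :=
  AddSubmonoid.closure ((fun x => Finsupp.single 0 (n - x) + Finsupp.single 1 x) '' {0, l, m, n})

section CurveMonoid

variable {l m n : ℕ}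

lemma single_zero_apply_one (a : ℕ) : Finsupp.single (0 : Fin 2) a 1 = 0 :=
  Finsupp.single_eq_of_ne (by decide)

lemma single_one_apply_zero (a : ℕ) : Finsupp.single (1 : Fin 2) a 0 = 0 :=
  Finsupp.single_eq_of_ne (by decide)

lemma single_add_single_apply_zero (u v : ℕ) :
    (Finsupp.single 0 u + Finsupp.single 1 v : Fin 2 →₀ ℕ) 0 = u := by
  rw [Finsupp.add_apply, Finsupp.single_eq_same, single_one_apply_zero, add_zero]

lemma single_add_single_apply_one (u v : ℕ) :
    (Finsupp.single 0 u + Finsupp.single 1 v : Fin 2 →₀ ℕ) 1 = v := by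
  rw [Finsupp.add_apply, Finsupp.single_eq_same, single_zero_apply_one, zero_add]

lemma mem_curveMonoid_iff (hl : l ≤ n) (hm : m ≤ n) {d : Fin 2 →₀ ℕ} :
    d ∈ curveMonoid l m n ↔ ∃ w, d 0 + d 1 = w * n ∧ IsSumOfAtMost l m n w (d 1) := by
  constructor
  · intro hd
    induction hd using AddSubmonoid.closure_induction with
    | mem _ hx =>
      obtain ⟨x, hx, rfl⟩ := hx
      rw [single_add_single_apply_zero, single_add_single_apply_one]
      simp only [Set.mem_insert_iff, Set.mem_singleton_iff] at hx
      refine ⟨1, by omega, ?_⟩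
      rcases hx with rfl | rfl | rfl | rfl
      exacts [⟨0, 0, 0, by simp, by simp⟩, ⟨1, 0, 0, by simp, by simp⟩,
        ⟨0, 1, 0, by simp, by simp⟩, ⟨0, 0, 1, by simp, by simp⟩]
    | zero => exact ⟨0, by simp, 0, 0, 0, by simp, le_rfl⟩
    | add _ _ _ _ hx hy =>
      obtain ⟨w, hw, hxw⟩ := hx
      obtain ⟨w', hw', hyw⟩ := hy
      exact ⟨w + w', by simp only [Finsupp.add_apply]; linarith, hxw.add hyw⟩
  · rintro ⟨w, hw, β, γ, δ, hy, hle⟩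
    let g (x : ℕ) : Fin 2 →₀ ℕ := Finsupp.single 0 (n - x) + Finsupp.single 1 x
    have hg {x : ℕ} (hx : x ∈ ({0, l, m, n} : Set ℕ)) : g x ∈ curveMonoid l m n :=
      AddSubmonoid.subset_closure ⟨x, hx, rfl⟩
    have hd : d = (w - (β + γ + δ)) • g 0 + β • g l + γ • g m + δ • g n := by
      ext i
      fin_cases i
      · suffices d 0 = (w - (β + γ + δ)) * n + β * (n - l) + γ * (n - m) by simpa [g]
        zify [hl, hm, hle] at hw hy ⊢
        linear_combination hw + hy
      · simp [g, ← hy]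
    rw [hd]
    refine add_mem (add_mem (add_mem ?_ ?_) ?_) ?_ <;> refine AddSubmonoid.nsmul_mem _ (hg ?_) _ <;>
      simp

lemma mem_vadd_curveMonoid_iff (hl : l ≤ n) (hm : m ≤ n) {d : Fin 2 →₀ ℕ} :
    d ∈ Finsupp.single (0 : Fin 2) n +ᵥ (curveMonoid l m n : Set (Fin 2 →₀ ℕ)) ↔
      ∃ w, d 0 + d 1 = (w + 1) * n ∧ IsSumOfAtMost l m n w (d 1) := by
  constructor
  · rintro ⟨s, hs, rfl⟩
    obtain ⟨w, hw, hsw⟩ := (mem_curveMonoid_iff hl hm).mp hs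
    simp only [vadd_eq_add, Finsupp.add_apply, Finsupp.single_eq_same, single_zero_apply_one,
      zero_add]
    exact ⟨w, by linarith, hsw⟩
  · rintro ⟨w, hw, hdw⟩
    have hnd : n ≤ d 0 := by have := hdw.le_mul hl hm; nlinarith
    refine ⟨d - Finsupp.single 0 n, (mem_curveMonoid_iff hl hm).mpr ⟨w, ?_, ?_⟩,
      add_tsub_cancel_of_le (Finsupp.single_le_iff.mpr hnd)⟩ <;>
    simp only [Finsupp.tsub_apply, Finsupp.single_eq_same, single_zero_apply_one, tsub_zero]
    · rw [add_one_mul] at hw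
      omega
    · exact hdw

theorem forall_vadd_curveMonoid_iff (hl : l ≤ n) (hm : m ≤ n) (hn : 0 < n) :
    (∀ d ∈ curveMonoid l m n,
      Finsupp.single (1 : Fin 2) n + d ∈
          Finsupp.single (0 : Fin 2) n +ᵥ (curveMonoid l m n : Set (Fin 2 →₀ ℕ)) →
        d ∈ Finsupp.single (0 : Fin 2) n +ᵥ (curveMonoid l m n : Set (Fin 2 →₀ ℕ))) ↔
      ∀ w y, IsSumOfAtMost l m n (w + 1) y → IsSumOfAtMost l m n (w + 1) (y + n) →
        IsSumOfAtMost l m n w y := by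
  simp_rw [mem_curveMonoid_iff hl hm, mem_vadd_curveMonoid_iff hl hm]
  simp only [Finsupp.add_apply, Finsupp.single_eq_same, single_one_apply_zero, zero_add]
  constructor
  · intro H w y hy hyn
    have hyw := hy.le_mul hl hm
    obtain ⟨w', hw', hyw'⟩ := H (Finsupp.single 0 ((w + 1) * n - y) + Finsupp.single 1 y)
      (by rw [single_add_single_apply_zero, single_add_single_apply_one]
          exact ⟨w + 1, by omega, hy⟩)
      (by rw [single_add_single_apply_zero, single_add_single_apply_one]
          exact ⟨w + 1, by rw [add_one_mul (w + 1)]; omega, by rwa [add_comm n]⟩)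
    simp only [single_add_single_apply_zero, single_add_single_apply_one] at hw' hyw'
    obtain rfl : w' = w := by
      have : (w + 1) * n = (w' + 1) * n := by omega
      have := Nat.eq_of_mul_eq_mul_right hn this
      omega
    exact hyw'
  · rintro H d ⟨w, hw, hdw⟩ ⟨w', hw', hdw'⟩
    obtain rfl : w = w' := by
      have : (w + 1) * n = (w' + 1) * n := by nlinarith
      have := Nat.eq_of_mul_eq_mul_right hn this
      omega
    rcases w with _ | w
    · have := hdw'.le_mul hl hm
      omega
    · exact ⟨w, hw, H w (d 1) hdw (by rwa [add_comm (d 1)])⟩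

end CurveMonoid

theorem stmt_17_general (k : Type*) [Field k] (l m n : ℕ) (hl : 0 < l) (hlm : l < m) (hmn : m < n)
    (a2 b2 c2 : ℕ)
    (ha2lt : a2 < n / Nat.gcd l n) (hc2pos : 0 < c2)
    (hrel2 : b2 * m = a2 * l + c2 * n)
    (hmin2 : ∀ b' : ℕ, 0 < b' →
      (∃ a' c' : ℕ, a' < n / Nat.gcd l n ∧ 0 < c' ∧ b' * m = a' * l + c' * n) → b2 ≤ b')
    (R : Subalgebra k (MvPolynomial (Fin 2) k))
    (hR : R = Algebra.adjoin k
      ({X 0 ^ n, X 0 ^ (n - l) * X 1 ^ l, X 0 ^ (n - m) * X 1 ^ m, X 1 ^ n} :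
        Set (MvPolynomial (Fin 2) k)))
    (xn yn : R)
    (hxn : (xn : MvPolynomial (Fin 2) k) = X 0 ^ n)
    (hyn : (yn : MvPolynomial (Fin 2) k) = X 1 ^ n) :
    RingTheory.Sequence.IsRegular R [xn, yn] ↔ a2 + c2 ≤ b2 := by
  have hRS : R = monomialSubalgebra k (curveMonoid l m n) := by
    rw [hR, curveMonoid, ← adjoin_monomial_image, Set.image_image]
    congr 1
    simp [Set.image_insert_eq, X_pow_eq_monomial, monomial_mul]
  subst hRS
  rw [isRegular_monomial_pair_iff (e := Finsupp.single 0 n) (e' := Finsupp.single 1 n)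
      (Finsupp.single_ne_zero.mpr (by omega)) (Finsupp.single_ne_zero.mpr (by omega))
      (by rw [hxn, X_pow_eq_monomial]) (by rw [hyn, X_pow_eq_monomial]),
    forall_vadd_curveMonoid_iff (hlm.trans hmn).le hmn.le (by omega),
    forall_isSumOfAtMost_iff hl hlm hmn ha2lt hc2pos hrel2 hmin2]

/-- Let `0 < ℓ < m < n` and `R = k[x^n, x^{n-ℓ}y^ℓ, x^{n-m}y^m, y^n]`.  Let `b₂` be the
smallest positive integer such that there exist `0 ≤ a₂ < n/gcd(ℓ,n)` and `c₂ > 0` with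
`b₂m = a₂ℓ + c₂n`.  Then `R` is Cohen–Macaulay (equivalently `x^n, y^n` is a regular
sequence on `R`) if and only if `b₂ ≥ a₂ + c₂`. -/
theorem stmt_17 (k : Type*) [Field k] (l m n : ℕ) (hl : 0 < l) (hlm : l < m) (hmn : m < n)
    (a2 b2 c2 : ℕ)
    (hb2pos : 0 < b2) (ha2lt : a2 < n / Nat.gcd l n) (hc2pos : 0 < c2)
    (hrel2 : b2 * m = a2 * l + c2 * n)
    (hmin2 : ∀ b' : ℕ, 0 < b' →
      (∃ a' c' : ℕ, a' < n / Nat.gcd l n ∧ 0 < c' ∧ b' * m = a' * l + c' * n) → b2 ≤ b')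
    (R : Subalgebra k (MvPolynomial (Fin 2) k))
    (hR : R = Algebra.adjoin k
      ({X 0 ^ n, X 0 ^ (n - l) * X 1 ^ l, X 0 ^ (n - m) * X 1 ^ m, X 1 ^ n} :
        Set (MvPolynomial (Fin 2) k)))
    (xn yn : R)
    (hxn : (xn : MvPolynomial (Fin 2) k) = X 0 ^ n)
    (hyn : (yn : MvPolynomial (Fin 2) k) = X 1 ^ n) :
    RingTheory.Sequence.IsRegular R [xn, yn] ↔ a2 + c2 ≤ b2 :=
  stmt_17_general k l m n hl hlm hmn a2 b2 c2 ha2lt hc2pos hrel2 hmin2 R hR xn yn hxn hyn
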